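/- For x > 0, coth(x) < 1/x + x/3. -/

import Mathlib

/-! Clearing denominators, the claim is `3 x cosh x < (3 + x²) sinh x`. The difference of the two
sides vanishes at `0` and has derivative `x (x cosh x - sinh x)`, whose second factor vanishes at `0`
in turn and has derivative `x sinh x > 0`; two monotonicity arguments finish the proof. -/

open Real

lemma apply_zero_lt_of_hasDerivAt_pos {f f' : ℝ → ℝ} (hf : ∀ y, HasDerivAt f (f' y) y)
    (hf' : ∀ y, 0 < y → 0 < f' y) {x : ℝ} (hx : 0 < x) : f 0 < f x := by
  have hmono : StrictMonoOn f (Set.Ici 0) := by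
    refine strictMonoOn_of_deriv_pos (convex_Ici 0)
      (fun y _ ↦ (hf y).continuousAt.continuousWithinAt) fun y hy ↦ ?_
    rw [interior_Ici] at hy
    rw [(hf y).deriv]
    exact hf' y hy
  exact hmono Set.self_mem_Ici hx.le hx

lemma Real.sinh_lt_mul_cosh {x : ℝ} (hx : 0 < x) : sinh x < x * cosh x := by
  have hderiv (y : ℝ) : HasDerivAt (fun y ↦ y * cosh y - sinh y) (y * sinh y) y :=
    (((hasDerivAt_id' y).mul (hasDerivAt_cosh y)).sub (hasDerivAt_sinh y)).congr_deriv
      (by ring)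
  have := apply_zero_lt_of_hasDerivAt_pos hderiv (fun y hy ↦ mul_pos hy (sinh_pos_iff.mpr hy)) hx
  simpa using this

lemma Real.three_mul_mul_cosh_lt {x : ℝ} (hx : 0 < x) :
    3 * x * cosh x < (3 + x ^ 2) * sinh x := by
  have hderiv (y : ℝ) : HasDerivAt (fun y ↦ (3 + y ^ 2) * sinh y - 3 * y * cosh y)
      (y * (y * cosh y - sinh y)) y :=
    ((((hasDerivAt_pow 2 y).const_add 3).mul (hasDerivAt_sinh y)).sub
      (((hasDerivAt_id' y).const_mul 3).mul (hasDerivAt_cosh y))).congr_deriv (by ring)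
  have := apply_zero_lt_of_hasDerivAt_pos hderiv
    (fun y hy ↦ mul_pos hy (sub_pos.mpr (sinh_lt_mul_cosh hy))) hx
  simpa using this

/-- For `x > 0`, `coth x < 1/x + x/3`. -/
theorem coth_lt_one_div_add_third (x : ℝ) (hx : 0 < x) :
    Real.cosh x / Real.sinh x < 1 / x + x / 3 := by
  have hsinh : 0 < sinh x := sinh_pos_iff.mpr hx
  calc cosh x / sinh x < (3 + x ^ 2) / (3 * x) := by
        rw [div_lt_div_iff₀ hsinh (by positivity)]
        linarith [three_mul_mul_cosh_lt hx]
    _ = 1 / x + x / 3 := by field_simp
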